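/- For every real b with 0 < b < 1, b·ln(b) + (b+1)·ln(2/(b+1)) > 0. -/

import Mathlib

open Real

/-- Strict convexity of `x ↦ x log x` at the midpoint of `x` and `y`. -/
theorem add_mul_log_half_lt {x y : ℝ} (hx : 0 ≤ x) (hy : 0 ≤ y) (hxy : x ≠ y) :
    (x + y) * log ((x + y) / 2) < x * log x + y * log y := by
  have h := strictConvexOn_mul_log.2 (Set.mem_Ici.2 hx) (Set.mem_Ici.2 hy) hxy
    (by norm_num : (0 : ℝ) < 1 / 2) (by norm_num : (0 : ℝ) < 1 / 2) (by norm_num)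
  simp only [smul_eq_mul] at h
  have hmid : 1 / 2 * x + 1 / 2 * y = (x + y) / 2 := by ring
  rw [hmid] at h
  linarith

theorem stmt6 (b : ℝ) (hb0 : 0 < b) (hb1 : b < 1) :
    0 < b * Real.log b + (b + 1) * Real.log (2 / (b + 1)) := by
  have h := add_mul_log_half_lt hb0.le zero_le_one hb1.ne
  rw [log_one, mul_zero, add_zero] at h
  rw [← inv_div, log_inv]
  linarith
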